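/- There exists a finite simple undirected graph G that is not bipartite and a labeling ℓ of its vertices such that: under ℓ and under F(ℓ) every vertex has a unique plurality label among its neighbors (so the synchronous LPA update F is forced, independently of the tie rule), F(ℓ) ≠ ℓ, and F(F(ℓ)) = ℓ. Hence the label-oscillation phenomenon of synchronous label propagation is not restricted to bipartite or star-like graphs: synchronous LPA can oscillate with period 2 on non-bipartite networks. -/

import Mathlib

/-
Take `K₃,₃` on the sides `{0,1,2}` and `{3,4,5}` and add the edge `{0,1}`, which creates the
triangle `0, 1, 3`. Label each vertex by its side. Every vertex has at least three neighbours on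
the other side and at most one on its own, so the label of the other side is a strict majority,
hence the unique plurality label: every plurality update swaps the two sides, and swapping twice
gives the labeling back.
-/

open scoped Classical in
/-- The number of neighbors of `v` that carry label `l` under the labeling `ℓ`. -/
noncomputable def nbrCount {V : Type*} [Fintype V] {L : Type*}
    (G : SimpleGraph V) (ℓ : V → L) (v : V) (l : L) : ℕ :=
  ((G.neighborFinset v).filter fun u => ℓ u = l).card

/-- `l` is a plurality label at `v` under `ℓ`. -/
def IsPlurality {V : Type*} [Fintype V] {L : Type*}
    (G : SimpleGraph V) (ℓ : V → L) (v : V) (l : L) : Prop :=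
  ∀ l', nbrCount G ℓ v l' ≤ nbrCount G ℓ v l

open Finset

section Plurality

variable {V L : Type*} [Fintype V] (G : SimpleGraph V) {ℓ : V → L} {v : V} {l : L}

def IsStrictPlurality (ℓ : V → L) (v : V) (l : L) : Prop :=
  ∀ l' ≠ l, nbrCount G ℓ v l' < nbrCount G ℓ v l

theorem nbrCount_eq_card_filter [DecidableRel G.Adj] [DecidableEq L] :
    nbrCount G ℓ v l = #{u ∈ G.neighborFinset v | ℓ u = l} := by
  unfold nbrCount
  convert rfl

theorem nbrCount_add_nbrCount_le_degree [DecidableRel G.Adj] {l' : L} (hne : l ≠ l') :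
    nbrCount G ℓ v l + nbrCount G ℓ v l' ≤ G.degree v := by
  classical
  rw [nbrCount_eq_card_filter, nbrCount_eq_card_filter, ← card_union_of_disjoint,
    ← G.card_neighborFinset_eq_degree]
  · exact card_le_card (union_subset (filter_subset _ _) (filter_subset _ _))
  · exact disjoint_filter.2 fun _ _ h h' => hne (h.symm.trans h')

variable {G}

theorem IsStrictPlurality.isPlurality (h : IsStrictPlurality G ℓ v l) : IsPlurality G ℓ v l :=
  fun l' => (eq_or_ne l' l).elim (fun e => e ▸ le_rfl) fun hne => (h l' hne).le

theorem IsStrictPlurality.eq_of_isPlurality (h : IsStrictPlurality G ℓ v l) {l' : L}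
    (h' : IsPlurality G ℓ v l') : l' = l := by
  by_contra hne
  exact (h l' hne).not_ge (h' l)

theorem IsStrictPlurality.existsUnique (h : IsStrictPlurality G ℓ v l) :
    ∃! l', IsPlurality G ℓ v l' :=
  ⟨l, h.isPlurality, fun _ => h.eq_of_isPlurality⟩

theorem isStrictPlurality_of_degree_lt_two_mul [DecidableRel G.Adj]
    (h : G.degree v < 2 * nbrCount G ℓ v l) : IsStrictPlurality G ℓ v l := fun l' hne => by
  have := nbrCount_add_nbrCount_le_degree G hne (ℓ := ℓ) (v := v)
  omega

theorem eq_of_forall_isStrictPlurality {F : (V → L) → V → L}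
    (hF : ∀ m v, IsPlurality G m v (F m v)) {ℓ' : V → L}
    (h : ∀ v, IsStrictPlurality G ℓ v (ℓ' v)) : F ℓ = ℓ' :=
  funext fun v => (h v).eq_of_isPlurality (hF ℓ v)

end Plurality

theorem not_exists_bool_coloring_of_triangle {V : Type*} {G : SimpleGraph V} {a b c : V}
    (hab : G.Adj a b) (hbc : G.Adj b c) (hac : G.Adj a c) :
    ¬ ∃ col : V → Bool, ∀ u w, G.Adj u w → col u ≠ col w := by
  rintro ⟨col, hcol⟩
  have hab' := hcol a b hab
  have hbc' := hcol b c hbc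
  have hac' := hcol a c hac
  revert hab' hbc' hac'
  cases col a <;> cases col b <;> cases col c <;> simp_all

def side (v : Fin 6) : ℕ := if (v : ℕ) < 3 then 0 else 1

def otherSide (v : Fin 6) : ℕ := if (v : ℕ) < 3 then 1 else 0

def k33AddEdge : SimpleGraph (Fin 6) :=
  SimpleGraph.fromRel fun u v => side u ≠ side v ∨ (u = 0 ∧ v = 1)

instance : DecidableRel k33AddEdge.Adj := fun u v =>
  inferInstanceAs (Decidable (u ≠ v ∧ ((side u ≠ side v ∨ (u = 0 ∧ v = 1)) ∨
    (side v ≠ side u ∨ (v = 0 ∧ u = 1)))))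

theorem k33AddEdge_not_bipartite :
    ¬ ∃ c : Fin 6 → Bool, ∀ u w, k33AddEdge.Adj u w → c u ≠ c w :=
  not_exists_bool_coloring_of_triangle (a := 0) (b := 1) (c := 3)
    (by decide) (by decide) (by decide)

theorem isStrictPlurality_side_otherSide (v : Fin 6) :
    IsStrictPlurality k33AddEdge side v (otherSide v) := by
  apply isStrictPlurality_of_degree_lt_two_mul
  rw [nbrCount_eq_card_filter]
  revert v; decide

theorem isStrictPlurality_otherSide_side (v : Fin 6) :
    IsStrictPlurality k33AddEdge otherSide v (side v) := by
  apply isStrictPlurality_of_degree_lt_two_mul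
  rw [nbrCount_eq_card_filter]
  revert v; decide

/-- The oscillation phenomenon of synchronous label propagation is not restricted to
bipartite graphs: there exist a finite simple graph `G` that is not bipartite (its vertex
set admits no two-part split with every edge joining the parts) and a labeling `ℓ` such
that every vertex has a unique plurality label under `ℓ`, and for every synchronous LPA
update `F` (which is thus forced, independently of the tie rule) every vertex has a unique
plurality label under `F ℓ` as well, `F ℓ ≠ ℓ`, and `F (F ℓ) = ℓ`. -/
theorem synchronous_oscillation_nonbipartite :
    ∃ (n : ℕ) (G : SimpleGraph (Fin n)) (ℓ : Fin n → ℕ),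
      (¬ ∃ c : Fin n → Bool, ∀ u w : Fin n, G.Adj u w → c u ≠ c w) ∧
      (∀ v : Fin n, ∃! l : ℕ, IsPlurality G ℓ v l) ∧
      ∀ F : (Fin n → ℕ) → (Fin n → ℕ),
        (∀ (m : Fin n → ℕ) (v : Fin n), IsPlurality G m v (F m v)) →
          (∀ v : Fin n, ∃! l : ℕ, IsPlurality G (F ℓ) v l) ∧
          F ℓ ≠ ℓ ∧ F (F ℓ) = ℓ := by
  refine ⟨6, k33AddEdge, side, k33AddEdge_not_bipartite,
    fun v => (isStrictPlurality_side_otherSide v).existsUnique, fun F hF => ?_⟩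
  have hside : F side = otherSide :=
    eq_of_forall_isStrictPlurality hF isStrictPlurality_side_otherSide
  have hother : F otherSide = side :=
    eq_of_forall_isStrictPlurality hF isStrictPlurality_otherSide_side
  refine ⟨hside ▸ fun v => (isStrictPlurality_otherSide_side v).existsUnique, ?_, ?_⟩
  · rw [hside]
    exact fun h => absurd (congrFun h 0) (by decide)
  · rw [hside, hother]
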